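/- arXiv:1205.1050 — 3 statements merged into one kernel-verified Lean document; each statement's English description precedes it below -/
import Mathlib

section
/- If G is a pointed directed acyclic graph (unique sink reachable from all vertices, indegree ≤ 2) with n vertices, then the pebbling formula Peb(G) has a tree-style resolution refutation of size 2n − 1. -/
attribute [local instance] Classical.propDecidable

/-- A clause: a finite set of literals, a literal being a variable with a sign. -/
abbrev Clause := Finset (ℕ × Bool)

/-- A directed graph with a designated sink vertex. -/
structure PGraph where
  verts : Finset ℕ
  edges : Finset (ℕ × ℕ)
  sink : ℕ

def edgeRel (G : PGraph) (u v : ℕ) : Prop := (u, v) ∈ G.edges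

def Reach (G : PGraph) (u v : ℕ) : Prop := Relation.ReflTransGen (edgeRel G) u v

noncomputable def preds (G : PGraph) (v : ℕ) : Finset ℕ :=
  (G.edges.filter (fun e => e.2 = v)).image Prod.fst

/-- A pointed graph: a DAG whose edges join vertices, indegrees at most 2, with a
unique sink belonging to the graph and reachable from every vertex. -/
def IsPointed (G : PGraph) : Prop :=
  G.sink ∈ G.verts ∧
  (∀ e ∈ G.edges, e.1 ∈ G.verts ∧ e.2 ∈ G.verts) ∧
  (∀ v, ¬ Relation.TransGen (edgeRel G) v v) ∧
  (∀ v ∈ G.verts, (preds G v).card ≤ 2) ∧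
  (∀ v ∈ G.verts, Reach G v G.sink)

/-- The clause of the pebbling formula associated with a vertex: the negations of its
predecessors, together with the vertex itself positively (omitted at the sink, which
plays the role of ⊥). Sources thus get unit clauses. -/
noncomputable def ClauseOf (G : PGraph) (v : ℕ) : Clause :=
  ((preds G v).image (fun u => (u, false))) ∪
    (if v = G.sink then (∅ : Clause) else {(v, true)})

/-- The pebbling formula Peb(G). -/
noncomputable def Peb (G : PGraph) : Set Clause := (fun v => ClauseOf G v) '' ↑G.verts

/-- Tree-style resolution derivations: a binary tree whose leaves are (occurrences of)
input clauses and whose internal nodes are resolution inferences on a stated variable. -/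
inductive RTree where
  | leaf : Clause → RTree
  | node : ℕ → RTree → RTree → RTree

/-- Conclusion clause of a resolution tree. -/
def conc : RTree → Clause
  | .leaf C => C
  | .node x l r => (conc l).erase (x, true) ∪ (conc r).erase (x, false)

/-- Validity: leaves are clauses of Σ, and each resolution step resolves a variable
occurring positively in the left premiss and negatively in the right premiss. -/
def valid (S : Set Clause) : RTree → Prop
  | .leaf C => C ∈ S
  | .node x l r => (x, true) ∈ conc l ∧ (x, false) ∈ conc r ∧ valid S l ∧ valid S r

/-- Size: the number of clause occurrences in the tree. -/
def tsize : RTree → ℕ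
  | .leaf _ => 1
  | .node _ l r => tsize l + tsize r + 1

/-- A tree-style resolution refutation of Σ. -/
def IsRefutation (S : Set Clause) (t : RTree) : Prop := valid S t ∧ conc t = ∅

/-!
Resolve the non-sink vertices away in a topological order. For a predecessor-closed set `U`
of non-sink vertices, let the frontier of `U` be the clause of all `¬u` with `u ∈ U` having an
edge leaving `U`. It has a tree-like derivation with `2 k + 1` clauses, `k` the number of
non-sink vertices outside `U`: when `k = 0` it is the sink clause itself; otherwise pick a
vertex `v ∉ U` all of whose predecessors lie in `U` and resolve its clause `preds → v`
against the derivation for `insert v U`, on `v`. The frontier of `∅` is the empty clause,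
and `2 (n - 1) + 1 = 2 n - 1`.
-/

theorem exists_mem_forall_not_rel_of_acyclic {α : Type*} {r : α → α → Prop}
    (hr : ∀ a, ¬ Relation.TransGen r a a) {s : Finset α} (hs : s.Nonempty) :
    ∃ a ∈ s, ∀ b ∈ s, ¬ r b a := by
  have : IsStrictOrder α (Relation.TransGen r) :=
    { irrefl := hr, trans := fun _ _ _ => .trans }
  obtain ⟨a, has, hmin⟩ := (Set.wellFoundedOn_iff.1 (s.finite_toSet.wellFoundedOn
    (r := Relation.TransGen r))).has_min s hs
  exact ⟨a, has, fun b hbs hba => hmin b hbs ⟨.single hba, hbs, has⟩⟩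

namespace PGraph

variable {G : PGraph}

lemma mem_preds {u v : ℕ} : u ∈ preds G v ↔ (u, v) ∈ G.edges := by
  simp [preds]

noncomputable def frontier (G : PGraph) (U : Finset ℕ) : Clause :=
  (U.filter fun u => ∃ w ∉ U, (u, w) ∈ G.edges).image fun u => (u, false)

lemma mem_frontier {U : Finset ℕ} {u : ℕ} {b : Bool} :
    (u, b) ∈ G.frontier U ↔ b = false ∧ u ∈ U ∧ ∃ w ∉ U, (u, w) ∈ G.edges := by
  simp only [frontier, Finset.mem_image, Finset.mem_filter, Prod.mk.injEq]
  grind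

lemma mem_clauseOf {v u : ℕ} {b : Bool} :
    (u, b) ∈ ClauseOf G v ↔
      (b = false ∧ (u, v) ∈ G.edges) ∨ (v ≠ G.sink ∧ u = v ∧ b = true) := by
  simp only [ClauseOf, Finset.mem_union, Finset.mem_image, mem_preds, Prod.mk.injEq]
  split_ifs <;> grind

lemma mk_sink_notMem_edges (hG : IsPointed G) (w : ℕ) : (G.sink, w) ∉ G.edges := fun h =>
  hG.2.2.1 _ (.head' h (hG.2.2.2.2 w (hG.2.1 _ h).2))

lemma exists_mem_edges_of_ne_sink (hG : IsPointed G) {v : ℕ} (hv : v ∈ G.verts)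
    (hvs : v ≠ G.sink) : ∃ w, (v, w) ∈ G.edges := by
  obtain h | ⟨w, hvw, -⟩ := (hG.2.2.2.2 v hv).cases_head
  · exact absurd h hvs
  · exact ⟨w, hvw⟩

lemma clauseOf_sink_eq_frontier (hG : IsPointed G) :
    ClauseOf G G.sink = G.frontier (G.verts.erase G.sink) := by
  ext ⟨u, b⟩
  simp only [mem_clauseOf, ne_eq, not_true_eq_false, false_and, or_false, mem_frontier,
    Finset.mem_erase]
  constructor
  · rintro ⟨rfl, hu⟩
    exact ⟨rfl, ⟨fun h => mk_sink_notMem_edges hG _ (h ▸ hu), (hG.2.1 _ hu).1⟩, _, by simp, hu⟩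
  · rintro ⟨rfl, -, w, hw, huw⟩
    have : w = G.sink := by
      by_contra h
      exact hw ⟨h, (hG.2.1 _ huw).2⟩
    exact ⟨rfl, this ▸ huw⟩

lemma resolve_clauseOf_frontier_insert {U : Finset ℕ} {v : ℕ} (hvs : v ≠ G.sink)
    (hvU : v ∉ U) (hpred : ∀ u, (u, v) ∈ G.edges → u ∈ U) :
    (ClauseOf G v).erase (v, true) ∪ (G.frontier (insert v U)).erase (v, false) =
      G.frontier U := by
  ext ⟨u, b⟩
  simp only [Finset.mem_union, Finset.mem_erase, mem_clauseOf, mem_frontier,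
    Finset.mem_insert]
  constructor
  · rintro (⟨hne, ⟨rfl, huv⟩ | ⟨-, rfl, rfl⟩⟩ | ⟨huv, rfl, rfl | huU, w, hw, huw⟩)
    · exact ⟨rfl, hpred u huv, v, hvU, huv⟩
    · exact absurd rfl hne
    · simp at huv
    · exact ⟨rfl, huU, w, fun h => hw (Or.inr h), huw⟩
  · rintro ⟨rfl, huU, w, hw, huw⟩
    by_cases hwv : w = v
    · exact Or.inl ⟨by simp, Or.inl ⟨rfl, hwv ▸ huw⟩⟩
    · exact Or.inr ⟨by grind, rfl, Or.inr huU, w, by grind, huw⟩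

theorem exists_valid_conc_frontier (hG : IsPointed G) {U : Finset ℕ}
    (hU : U ⊆ G.verts.erase G.sink) (hclosed : ∀ u w, (u, w) ∈ G.edges → w ∈ U → u ∈ U) :
    ∃ t, valid (Peb G) t ∧ conc t = G.frontier U ∧
      tsize t = 2 * (G.verts.erase G.sink \ U).card + 1 := by
  induction hk : (G.verts.erase G.sink \ U).card generalizing U with
  | zero =>
    have hUeq : U = G.verts.erase G.sink :=
      hU.antisymm (Finset.sdiff_eq_empty_iff_subset.1 (Finset.card_eq_zero.1 hk))
    exact ⟨.leaf (ClauseOf G G.sink), ⟨G.sink, hG.1, rfl⟩,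
      hUeq ▸ clauseOf_sink_eq_frontier hG, rfl⟩
  | succ k ih =>
    obtain ⟨v, hvC, hvmin⟩ := exists_mem_forall_not_rel_of_acyclic hG.2.2.1
      (s := G.verts.erase G.sink \ U) (Finset.card_pos.1 (by omega))
    obtain ⟨hvE, hvU⟩ := Finset.mem_sdiff.1 hvC
    obtain ⟨hvs, hv⟩ := Finset.mem_erase.1 hvE
    have hpred : ∀ u, (u, v) ∈ G.edges → u ∈ U := fun u huv => by
      by_contra huU
      refine hvmin u (Finset.mem_sdiff.2 ⟨Finset.mem_erase.2 ⟨?_, (hG.2.1 _ huv).1⟩, huU⟩) huv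
      rintro rfl
      exact mk_sink_notMem_edges hG v huv
    obtain ⟨t, ht, hconc, hsize⟩ := ih (U := insert v U) (Finset.insert_subset hvE hU)
      (fun u w huw hw => by
        rcases Finset.mem_insert.1 hw with rfl | hw
        · exact Finset.mem_insert_of_mem (hpred u huw)
        · exact Finset.mem_insert_of_mem (hclosed u w huw hw))
      (by rw [Finset.sdiff_insert, Finset.card_erase_of_mem hvC, hk]; rfl)
    obtain ⟨w, hvw⟩ := exists_mem_edges_of_ne_sink hG hv hvs
    have hwv : w ≠ v := by
      rintro rfl
      exact hG.2.2.1 w (.single hvw)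
    have hwU : w ∉ insert v U := by
      simpa [hwv] using fun h => hvU (hclosed v w hvw h)
    have hvt : (v, false) ∈ conc t :=
      hconc ▸ mem_frontier.2 ⟨rfl, Finset.mem_insert_self v U, w, hwU, hvw⟩
    refine ⟨.node v (.leaf (ClauseOf G v)) t, ⟨mem_clauseOf.2 (.inr ⟨hvs, rfl, rfl⟩), hvt,
      ⟨v, hv, rfl⟩, ht⟩, ?_, ?_⟩
    · rw [conc, conc, hconc, resolve_clauseOf_frontier_insert hvs hvU hpred]
    · simp only [tsize, hsize]
      omega

end PGraph

/-- If G is a pointed graph with n vertices, then Peb(G) has a tree-style resolution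
refutation of size 2n − 1. -/
theorem pebbling_tree_refutation_size (G : PGraph) (hG : IsPointed G) :
    ∃ t : RTree, IsRefutation (Peb G) t ∧ tsize t = 2 * G.verts.card - 1 := by
  obtain ⟨t, ht, hconc, hsize⟩ :=
    G.exists_valid_conc_frontier hG (Finset.empty_subset _) (by simp)
  refine ⟨t, ⟨ht, hconc.trans (by simp [PGraph.frontier])⟩, ?_⟩
  rw [hsize, Finset.sdiff_empty, Finset.card_erase_of_mem hG.1]
  have := Finset.card_pos.2 ⟨_, hG.1⟩
  omega
end

section
/- For every pointed graph G and every vertex v of G (other than the sink), the pebbling number of G is at most max(♯(G[v:=0]), ♯(G[v:=1]) + 1), where G[v:=0] is the restriction of G to vertices from which v is reachable (with sink v), and G[v:=1] is obtained by deleting v and all incident edges and restricting to vertices from which the original sink remains reachable. -/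
attribute [local instance] Classical.propDecidable

/-- A total truth assignment satisfies a clause if it makes some literal true. -/
def clauseSat (a : ℕ → Bool) (C : Clause) : Prop :=
  ∃ l ∈ C, (if l.2 then a l.1 else !(a l.1)) = true

/-- A set of clauses is unsatisfiable (contradictory). -/
def Unsat (S : Set Clause) : Prop := ∀ a : ℕ → Bool, ¬ ∀ C ∈ S, clauseSat a C

/-- A legal move of the pebbling game: place a pebble on a vertex all of whose
predecessors are pebbled (for sources this allows placement at any time), or remove
a pebble from any vertex. -/
def PebStep (G : PGraph) (C D : Finset ℕ) : Prop :=
  (∃ v ∈ G.verts, preds G v ⊆ C ∧ D = insert v C) ∨ (∃ v, D = C.erase v)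

/-- A (successful) strategy for the pebbling game on G: a sequence of configurations
starting from the empty configuration, each obtained from the previous by a legal
move, ending with a pebble on the sink. -/
def IsStrategy (G : PGraph) (L : List (Finset ℕ)) : Prop :=
  L.head? = some ∅ ∧ (∃ C, L.getLast? = some C ∧ G.sink ∈ C) ∧ List.Chain' (PebStep G) L

/-- The cost of a strategy: the maximum number of pebbles simultaneously on the graph. -/
def cost (L : List (Finset ℕ)) : ℕ := (L.map Finset.card).foldr max 0

/-- The pebbling number ♯G: the minimum cost of a strategy for the pebbling game on G. -/
noncomputable def pebNum (G : PGraph) : ℕ :=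
  sInf { p | ∃ L : List (Finset ℕ), IsStrategy G L ∧ cost L ≤ p }

/-- G[v:=0]: the induced subgraph on the vertices from which v is reachable, with v
as the new sink. -/
noncomputable def restrict0 (G : PGraph) (v : ℕ) : PGraph where
  verts := G.verts.filter (fun u => Reach G u v)
  edges := G.edges.filter (fun e => Reach G e.1 v ∧ Reach G e.2 v)
  sink := v

/-- Deletion of a vertex together with all edges entering or leaving it. -/
def deleteVert (G : PGraph) (v : ℕ) : PGraph where
  verts := G.verts.erase v
  edges := G.edges.filter (fun e => e.1 ≠ v ∧ e.2 ≠ v)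
  sink := G.sink

/-- Restriction of a graph to the vertices from which the sink is reachable. -/
noncomputable def restrictSink (G : PGraph) : PGraph where
  verts := G.verts.filter (fun u => Reach G u G.sink)
  edges := G.edges.filter (fun e => Reach G e.1 G.sink ∧ Reach G e.2 G.sink)
  sink := G.sink

/-- G[v:=1]: delete v and all incident edges, then restrict to the vertices from which
the original sink remains reachable. -/
noncomputable def restrict1 (G : PGraph) (v : ℕ) : PGraph := restrictSink (deleteVert G v)

/-! Pebble `G[v:=0]` optimally, which leaves a pebble on `v`; remove all other pebbles; then
play an optimal strategy for `G[v:=1]` while keeping `v` pebbled. Every move of `G[v:=1]` is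
legal in `G` once `v` carries a pebble, at the price of that one extra pebble. Both subgames can
be won at all because a finite acyclic graph can be pebbled in topological order. -/

open Finset Relation

section Pebbling

variable {G : PGraph}

lemma mem_preds {w u : ℕ} : w ∈ preds G u ↔ (w, u) ∈ G.edges := by
  simp [preds]

lemma cost_le_iff {L : List (Finset ℕ)} {p : ℕ} : cost L ≤ p ↔ ∀ C ∈ L, C.card ≤ p := by
  induction L <;> simp_all [cost]

def ReachableWithin (G : PGraph) (p : ℕ) : Finset ℕ → Finset ℕ → Prop :=
  ReflTransGen fun C D => PebStep G C D ∧ D.card ≤ p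

lemma ReachableWithin.mono {p q : ℕ} {C D : Finset ℕ} (h : ReachableWithin G p C D) (hpq : p ≤ q) :
    ReachableWithin G q C D :=
  ReflTransGen.mono (fun _ _ h => ⟨h.1, h.2.trans hpq⟩) _ _ h

lemma ReachableWithin.card_le {p : ℕ} {C D : Finset ℕ} (h : ReachableWithin G p C D)
    (hC : C.card ≤ p) : D.card ≤ p := by
  induction h with
  | refl => exact hC
  | tail _ hstep _ => exact hstep.2

lemma exists_strategy_cost_le_iff {p : ℕ} :
    (∃ L, IsStrategy G L ∧ cost L ≤ p) ↔ ∃ C, G.sink ∈ C ∧ ReachableWithin G p ∅ C := by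
  constructor
  · rintro ⟨_ | ⟨C₀, l⟩, ⟨hhead, ⟨C, hlast, hC⟩, hchain⟩, hcost⟩
    · simp at hhead
    obtain rfl : C₀ = ∅ := by simpa using hhead
    refine ⟨C, hC, List.relationReflTransGen_of_exists_isChain_cons l ?_ ?_⟩
    · exact hchain.imp_of_mem_imp fun _ D _ hD h => ⟨h, cost_le_iff.1 hcost D hD⟩
    · simpa [List.getLast?_eq_some_getLast] using hlast
  · rintro ⟨C, hC, h⟩
    obtain ⟨l, hchain, hlast⟩ := List.exists_isChain_cons_of_relationReflTransGen h
    refine ⟨∅ :: l, ⟨rfl, ⟨C, by simp [List.getLast?_eq_some_getLast, hlast], hC⟩,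
      hchain.imp fun _ _ h => h.1⟩, ?_⟩
    exact cost_le_iff.2 <| hchain.induction (fun D => D.card ≤ p) _ (fun _ _ h _ => h.2)
      (fun _ => by simp)

lemma pebNum_eq_sInf : pebNum G = sInf {p | ∃ C, G.sink ∈ C ∧ ReachableWithin G p ∅ C} := by
  simp only [pebNum, exists_strategy_cost_le_iff]

lemma pebNum_le_of_reachableWithin {p : ℕ} {C : Finset ℕ} (h : ReachableWithin G p ∅ C)
    (hC : G.sink ∈ C) : pebNum G ≤ p :=
  pebNum_eq_sInf (G := G) ▸ Nat.sInf_le ⟨C, hC, h⟩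

lemma exists_reachableWithin_pebNum (h : ∃ p C, G.sink ∈ C ∧ ReachableWithin G p ∅ C) :
    ∃ C, G.sink ∈ C ∧ ReachableWithin G (pebNum G) ∅ C :=
  pebNum_eq_sInf (G := G) ▸ Nat.sInf_mem h

lemma reachableWithin_erase {p : ℕ} {C : Finset ℕ} (u : ℕ) (hC : C.card ≤ p) :
    ReachableWithin G p C (C.erase u) :=
  .single ⟨Or.inr ⟨u, rfl⟩, (card_erase_le).trans hC⟩

lemma reachableWithin_singleton {p : ℕ} {C : Finset ℕ} {v : ℕ} (hv : v ∈ C) (hC : C.card ≤ p) :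
    ReachableWithin G p C {v} := by
  rw [← insert_erase hv] at hC ⊢
  generalize C.erase v = s at hC
  induction s using Finset.induction_on with
  | empty => exact .refl
  | @insert a s ha ih =>
    rcases eq_or_ne a v with rfl | hav
    · rw [insert_idem] at hC ⊢
      exact ih hC
    · have herase : (insert v (insert a s)).erase a = insert v s := by
        rw [erase_insert_of_ne hav.symm, erase_insert ha]
      have hstep := reachableWithin_erase (G := G) a hC
      rw [herase] at hstep
      exact hstep.trans (ih (herase ▸ (card_erase_le).trans hC))

lemma exists_mem_forall_not_edgeRel (hac : ∀ u, ¬ TransGen (edgeRel G) u u) {S : Finset ℕ}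
    (hS : S.Nonempty) : ∃ w ∈ S, ∀ u ∈ S, ¬ edgeRel G w u := by
  let below : S → S → Prop := fun a b => TransGen (edgeRel G) b a
  have : IsTrans S below := ⟨fun _ _ _ hab hbc => hbc.trans hab⟩
  have : Std.Irrefl below := ⟨fun a => hac a⟩
  obtain ⟨w, -, hw⟩ :=
    (Finite.wellFounded_of_trans_of_irrefl below).has_min Set.univ ⟨⟨_, hS.choose_spec⟩, trivial⟩
  exact ⟨w, w.2, fun u hu h => hw ⟨u, hu⟩ trivial (.single h)⟩

lemma reachableWithin_of_preds_subset (hac : ∀ u, ¬ TransGen (edgeRel G) u u) {S : Finset ℕ}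
    (hSV : S ⊆ G.verts) (hS : ∀ u ∈ S, preds G u ⊆ S) : ReachableWithin G S.card ∅ S := by
  induction S using Finset.strongInduction with
  | H S ih =>
  -- pebble `S` in topological order, placing last a vertex with no successor in `S`
  rcases S.eq_empty_or_nonempty with rfl | hne
  · exact .refl
  obtain ⟨w, hw, hmax⟩ := exists_mem_forall_not_edgeRel hac hne
  have hclosed : ∀ u ∈ S.erase w, preds G u ⊆ S.erase w := fun u hu x hx =>
    mem_erase.2 ⟨by rintro rfl; exact hmax u (mem_of_mem_erase hu) (mem_preds.1 hx),
      hS u (mem_of_mem_erase hu) hx⟩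
  have hpreds : preds G w ⊆ S.erase w := fun x hx =>
    mem_erase.2 ⟨by rintro rfl; exact hac x (.single (mem_preds.1 hx)), hS w hw hx⟩
  have hrest := ih _ (erase_ssubset hw) ((erase_subset _ _).trans hSV) hclosed
  exact (hrest.mono card_erase_le).tail
    ⟨Or.inl ⟨w, hSV hw, hpreds, (insert_erase hw).symm⟩, le_rfl⟩

end Pebbling

structure IsRootedDAG (G : PGraph) : Prop where
  sink_mem : G.sink ∈ G.verts
  edge_mem : ∀ e ∈ G.edges, e.1 ∈ G.verts ∧ e.2 ∈ G.verts
  acyclic : ∀ v, ¬ TransGen (edgeRel G) v v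

lemma IsPointed.isRootedDAG {G : PGraph} (hG : IsPointed G) : IsRootedDAG G :=
  ⟨hG.1, hG.2.1, hG.2.2.1⟩

namespace IsRootedDAG

variable {G : PGraph}

lemma exists_reachableWithin_pebNum (hG : IsRootedDAG G) :
    ∃ C, G.sink ∈ C ∧ ReachableWithin G (pebNum G) ∅ C :=
  _root_.exists_reachableWithin_pebNum ⟨_, _, hG.sink_mem,
    reachableWithin_of_preds_subset hG.acyclic subset_rfl
      fun _ _ _ hx => (hG.edge_mem _ (mem_preds.1 hx)).1⟩

lemma acyclic_of_edges_subset {H : PGraph} (hG : IsRootedDAG G) (hHG : H.edges ⊆ G.edges) :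
    ∀ v, ¬ TransGen (edgeRel H) v v :=
  fun v hv => hG.acyclic v (TransGen.mono (fun _ _ h => hHG h) _ _ hv)

lemma restrict0 (hG : IsRootedDAG G) {v : ℕ} (hv : v ∈ G.verts) :
    IsRootedDAG (restrict0 G v) where
  sink_mem := mem_filter.2 ⟨hv, .refl⟩
  edge_mem e he := by
    obtain ⟨he, h₁, h₂⟩ := mem_filter.1 he
    exact ⟨mem_filter.2 ⟨(hG.edge_mem e he).1, h₁⟩, mem_filter.2 ⟨(hG.edge_mem e he).2, h₂⟩⟩
  acyclic := hG.acyclic_of_edges_subset (filter_subset _ _)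

lemma deleteVert (hG : IsRootedDAG G) {v : ℕ} (hvs : v ≠ G.sink) :
    IsRootedDAG (deleteVert G v) where
  sink_mem := mem_erase.2 ⟨hvs.symm, hG.sink_mem⟩
  edge_mem e he := by
    obtain ⟨he, h₁, h₂⟩ := mem_filter.1 he
    exact ⟨mem_erase.2 ⟨h₁, (hG.edge_mem e he).1⟩, mem_erase.2 ⟨h₂, (hG.edge_mem e he).2⟩⟩
  acyclic := hG.acyclic_of_edges_subset (filter_subset _ _)

lemma restrictSink (hG : IsRootedDAG G) : IsRootedDAG (restrictSink G) where
  sink_mem := mem_filter.2 ⟨hG.sink_mem, .refl⟩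
  edge_mem e he := by
    obtain ⟨he, h₁, h₂⟩ := mem_filter.1 he
    exact ⟨mem_filter.2 ⟨(hG.edge_mem e he).1, h₁⟩, mem_filter.2 ⟨(hG.edge_mem e he).2, h₂⟩⟩
  acyclic := hG.acyclic_of_edges_subset (filter_subset _ _)

lemma restrict1 (hG : IsRootedDAG G) {v : ℕ} (hvs : v ≠ G.sink) : IsRootedDAG (restrict1 G v) :=
  (hG.deleteVert hvs).restrictSink

end IsRootedDAG

section Lifting

variable {G : PGraph} {v p : ℕ} {C D : Finset ℕ}

lemma preds_subset_preds_restrict0 {u : ℕ} (hu : Reach G u v) :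
    preds G u ⊆ preds (restrict0 G v) u := fun w hw => by
  rw [mem_preds] at hw ⊢
  exact mem_filter.2 ⟨hw, .head hw hu, hu⟩

lemma ReachableWithin.of_restrict0 (h : ReachableWithin (restrict0 G v) p C D) :
    ReachableWithin G p C D := by
  refine ReflTransGen.mono (fun C D ⟨hstep, hcard⟩ => ⟨?_, hcard⟩) _ _ h
  rcases hstep with ⟨u, hu, hpreds, rfl⟩ | hremove
  · obtain ⟨hu, hreach⟩ := mem_filter.1 hu
    exact Or.inl ⟨u, hu, (preds_subset_preds_restrict0 hreach).trans hpreds, rfl⟩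
  · exact Or.inr hremove

lemma preds_subset_insert_preds_restrict1 {u : ℕ} (hu : u ∈ (restrict1 G v).verts) :
    preds G u ⊆ insert v (preds (restrict1 G v) u) := by
  intro w hw
  rcases eq_or_ne w v with rfl | hwv
  · exact mem_insert_self _ _
  obtain ⟨hu, hreach⟩ := mem_filter.1 hu
  have hedge : (w, u) ∈ (deleteVert G v).edges :=
    mem_filter.2 ⟨mem_preds.1 hw, hwv, (mem_erase.1 hu).1⟩
  exact mem_insert_of_mem (mem_preds.2 (mem_filter.2 ⟨hedge, .head hedge hreach, hreach⟩))

lemma ReachableWithin.insert_of_restrict1 (h : ReachableWithin (restrict1 G v) p C D) :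
    ReachableWithin G (p + 1) (insert v C) (insert v D) := by
  refine ReflTransGen.lift' (insert v) (fun C D ⟨hstep, hcard⟩ =>
    show ReflTransGen _ (insert v C) (insert v D) from ?_) _ _ h
  have hcard' : (insert v D).card ≤ p + 1 := (card_insert_le v D).trans (by omega)
  rcases hstep with ⟨u, hu, hpreds, rfl⟩ | ⟨u, rfl⟩
  · refine .single ⟨Or.inl ⟨u, (mem_erase.1 (mem_filter.1 hu).1).2, ?_, insert_comm _ _ _⟩, hcard'⟩
    exact (preds_subset_insert_preds_restrict1 hu).trans (insert_subset_insert v hpreds)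
  · rcases eq_or_ne u v with rfl | huv
    · -- removing the pebble from `v` is invisible once `v` is kept pebbled
      rw [show insert u (C.erase u) = insert u C by grind]
    · rw [← erase_insert_of_ne huv.symm] at hcard' ⊢
      exact .single ⟨Or.inr ⟨u, rfl⟩, hcard'⟩

end Lifting

/-- For every pointed graph G and non-sink vertex v,
    ♯G ≤ max(♯(G[v:=0]), ♯(G[v:=1]) + 1). -/
theorem pebbling_number_case_split (G : PGraph) (hG : IsPointed G)
    (v : ℕ) (hv : v ∈ G.verts) (hvs : v ≠ G.sink) :
    pebNum G ≤ max (pebNum (restrict0 G v)) (pebNum (restrict1 G v) + 1) := by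
  obtain ⟨C₀, hvC₀, h₀⟩ := (hG.isRootedDAG.restrict0 hv).exists_reachableWithin_pebNum
  obtain ⟨C₁, hC₁, h₁⟩ := (hG.isRootedDAG.restrict1 hvs).exists_reachableWithin_pebNum
  set p := max (pebNum (restrict0 G v)) (pebNum (restrict1 G v) + 1)
  have hpebble : ReachableWithin G p ∅ C₀ := h₀.of_restrict0.mono (le_max_left _ _)
  have hclear : ReachableWithin G p C₀ {v} :=
    reachableWithin_singleton hvC₀ (hpebble.card_le (by simp))
  have hfinish : ReachableWithin G p {v} (insert v C₁) := by
    simpa using h₁.insert_of_restrict1.mono (le_max_right _ _)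
  exact pebNum_le_of_reachableWithin (hpebble.trans (hclear.trans hfinish))
    (mem_insert_of_mem hC₁)
end

section
/- Let G be a pointed graph with n vertices, V its set of n−1 non-sink variables, and p = ⌈log⁵ n⌉. For every d > 0 and all sufficiently large n, there exists a function σ : G → V^p such that for all A ⊆ G and B ⊆ V with |A| = |B| = ⌊dn/log n⌋, the set of variables occurring in the sequences {σ(v) : v ∈ A} intersects B in at least dn/(2 log n) elements. -/
attribute [local instance] Classical.propDecidable

/-- The set of variables of B hit by some coordinate of some σ(v), v ∈ A:  σ(A) ∩ B. -/
noncomputable def hitSet {p : ℕ} (σ : ℕ → Fin p → ℕ) (A B : Finset ℕ) : Finset ℕ :=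
  B.filter (fun x => ∃ v ∈ A, ∃ i : Fin p, σ v i = x)

/-!
A union bound over all maps `σ`, carried out by counting. Let `m = ⌊dn / log n⌋`, `y = ⌈m/2⌉` and
`N = n - 1`. For fixed `A` with `|A| = m` and `Y ⊆ V` with `|Y| = y`, the maps with
`σ(A) ∩ Y = ∅` form a fraction `(1 - y/N)^{mp} ≤ exp (-ymp/N)` of all maps. There are at most
`n^{m+y}` such pairs `(A, Y)`, and `ymp/N ≳ d n log⁴ n` beats `(m + y) log n ≲ d n`, so a union
bound leaves a map `σ` for which every such `Y` meets `σ(A)`. For `|B| = m` fewer than `y`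
elements of `B` are then missed by `σ(A)`, so at least `m + 1 - y ≥ (m + 1)/2 > dn / (2 log n)`
are hit.
-/

open Finset Real Filter

section HittingMaps

variable {α β : Type*} [Fintype α] [DecidableEq α] [Fintype β] [DecidableEq β]

def avoidingMaps (p : ℕ) (A : Finset α) (Y : Finset β) : Finset (α × Fin p → β) :=
  Fintype.piFinset fun a => if a.1 ∈ A then Yᶜ else univ

theorem mem_avoidingMaps {p : ℕ} {A : Finset α} {Y : Finset β} {f : α × Fin p → β} :
    f ∈ avoidingMaps p A Y ↔ ∀ a ∈ A, ∀ i, f (a, i) ∉ Y := by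
  simp only [avoidingMaps, Fintype.mem_piFinset, Prod.forall]
  refine forall_congr' fun a => ⟨fun h ha i => ?_, fun h i => ?_⟩
  · simpa [ha] using h i
  · by_cases ha : a ∈ A <;> simp [ha, h]

theorem card_avoidingMaps (p : ℕ) (A : Finset α) (Y : Finset β) :
    #(avoidingMaps p A Y) =
      (Fintype.card β - #Y) ^ (#A * p) * Fintype.card β ^ ((Fintype.card α - #A) * p) := by
  have hA : #(univ.filter fun a : α × Fin p => a.1 ∈ A) = #A * p := by
    rw [show univ.filter (fun a : α × Fin p => a.1 ∈ A) = A ×ˢ univ by ext; simp,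
      card_product, card_univ, Fintype.card_fin]
  have hAc : #(univ.filter fun a : α × Fin p => a.1 ∉ A) = (Fintype.card α - #A) * p := by
    rw [filter_not, card_sdiff_of_subset (filter_subset _ _), hA, card_univ, Fintype.card_prod,
      Fintype.card_fin, Nat.sub_mul]
  simp only [avoidingMaps, Fintype.card_piFinset, apply_ite card, card_compl, card_univ]
  rw [prod_ite, prod_const, prod_const, hA, hAc]

theorem Fintype.exists_hitting_map [Nonempty β] {p m y : ℕ} (hm : m ≤ Fintype.card α)
    (h : (Fintype.card α).choose m * (Fintype.card β).choose y * (Fintype.card β - y) ^ (m * p) <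
      Fintype.card β ^ (m * p)) :
    ∃ f : α × Fin p → β, ∀ A : Finset α, #A = m → ∀ Y : Finset β, #Y = y →
      ∃ a ∈ A, ∃ i, f (a, i) ∈ Y := by
  set bad := (powersetCard m univ ×ˢ powersetCard y univ).biUnion
    fun AY : Finset α × Finset β => avoidingMaps p AY.1 AY.2
  have hbad : #bad < #(univ : Finset (α × Fin p → β)) := calc
    #bad ≤ ∑ AY ∈ powersetCard m univ ×ˢ powersetCard y univ, #(avoidingMaps p AY.1 AY.2) :=
      card_biUnion_le
    _ = (Fintype.card α).choose m * (Fintype.card β).choose y *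
        (Fintype.card β - y) ^ (m * p) * Fintype.card β ^ ((Fintype.card α - m) * p) := by
      rw [sum_const_nat fun AY hAY => by
        rw [mem_product, mem_powersetCard, mem_powersetCard] at hAY
        rw [card_avoidingMaps, hAY.1.2, hAY.2.2]]
      rw [card_product, card_powersetCard, card_powersetCard, card_univ, card_univ]
      ring
    _ < Fintype.card β ^ (m * p) * Fintype.card β ^ ((Fintype.card α - m) * p) :=
      Nat.mul_lt_mul_of_pos_right h (by positivity)
    _ = #(univ : Finset (α × Fin p → β)) := by
      rw [← pow_add, ← add_mul, Nat.add_sub_cancel' hm, card_univ, Fintype.card_fun,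
        Fintype.card_prod, Fintype.card_fin]
  obtain ⟨f, -, hf⟩ := exists_mem_notMem_of_card_lt_card hbad
  refine ⟨f, fun A hA Y hY => ?_⟩
  by_contra! hc
  exact hf (mem_biUnion.2 ⟨(A, Y), by simp [hA, hY], mem_avoidingMaps.2 hc⟩)

end HittingMaps

theorem Finset.exists_hitting_map {α β : Type*} [DecidableEq α] [DecidableEq β]
    (W : Finset α) (V : Finset β) {p m y : ℕ} (hV : V.Nonempty) (hm : m ≤ #W)
    (h : (#W).choose m * (#V).choose y * (#V - y) ^ (m * p) < #V ^ (m * p)) :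
    ∃ σ : α → Fin p → β, (∀ v ∈ W, ∀ i, σ v i ∈ V) ∧
      ∀ A ⊆ W, #A = m → ∀ Y ⊆ V, #Y = y → ∃ v ∈ A, ∃ i, σ v i ∈ Y := by
  have := hV.to_subtype
  obtain ⟨f, hf⟩ := Fintype.exists_hitting_map (α := W) (β := V) (p := p) (m := m) (y := y)
    (by rwa [Fintype.card_coe]) (by simpa only [Fintype.card_coe] using h)
  obtain ⟨b, hb⟩ := hV
  refine ⟨fun v i => if hv : v ∈ W then f (⟨v, hv⟩, i) else b, fun v hv i => by simp [hv],
    fun A hA hAm Y hY hYy => ?_⟩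
  obtain ⟨⟨v, hvW⟩, hvA, i, hi⟩ := hf (A.subtype (· ∈ W))
    (by rw [card_subtype, filter_true_of_mem hA, hAm]) (Y.subtype (· ∈ V))
    (by rw [card_subtype, filter_true_of_mem hY, hYy])
  exact ⟨v, by simpa using hvA, i, by simpa [hvW] using hi⟩

theorem card_lt_card_hitSet_add {p y : ℕ} {σ : ℕ → Fin p → ℕ} {A B : Finset ℕ}
    (hσ : ∀ Y ⊆ B, #Y = y → ∃ v ∈ A, ∃ i, σ v i ∈ Y) : #B < #(hitSet σ A B) + y := by
  by_contra! h
  have hmiss : y ≤ #(B \ hitSet σ A B) := by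
    have := card_sdiff_add_card_eq_card (show hitSet σ A B ⊆ B from filter_subset _ _)
    omega
  obtain ⟨Y, hYmiss, hYy⟩ := exists_subset_card_eq hmiss
  obtain ⟨v, hv, i, hi⟩ := hσ Y (hYmiss.trans sdiff_subset) hYy
  have := hYmiss hi
  simp only [hitSet, Finset.mem_sdiff, mem_filter] at this
  exact this.2 ⟨this.1, v, hv, i, rfl⟩

theorem choose_mul_choose_mul_pow_lt {n N m y k : ℕ} (hN : 0 < N) (hNn : N ≤ n) (hy : y ≤ N)
    (h : (m + y) * log n < k * y / N) :
    n.choose m * N.choose y * (N - y) ^ k < N ^ k := by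
  have hn : (0 : ℝ) < n := by exact_mod_cast hN.trans_le hNn
  have hNR : (0 : ℝ) < N := by exact_mod_cast hN
  have hsub : ((N - y : ℕ) : ℝ) ≤ N * exp (-(y / N)) := by
    rw [Nat.cast_sub hy]
    calc (N : ℝ) - y = N * (1 - y / N) := by field_simp
      _ ≤ N * exp (-(y / N)) := by gcongr; exact one_sub_le_exp_neg _
  have hchoose : ((n.choose m * N.choose y : ℕ) : ℝ) ≤ n ^ (m + y) := by
    rw [pow_add]
    push_cast
    gcongr
    · exact_mod_cast Nat.choose_le_pow n m
    · exact_mod_cast (Nat.choose_le_pow N y).trans (Nat.pow_le_pow_left hNn y)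
  suffices ((n.choose m * N.choose y * (N - y) ^ k : ℕ) : ℝ) < (N ^ k : ℕ) by exact_mod_cast this
  calc ((n.choose m * N.choose y * (N - y) ^ k : ℕ) : ℝ)
      ≤ n ^ (m + y) * (N * exp (-(y / N))) ^ k := by
        rw [Nat.cast_mul, Nat.cast_pow]
        exact mul_le_mul hchoose (pow_le_pow_left₀ (Nat.cast_nonneg _) hsub k) (by positivity)
          (by positivity)
    _ = N ^ k * exp ((m + y) * log n - k * y / N) := by
        rw [mul_pow, ← exp_nat_mul, ← rpow_natCast, rpow_def_of_pos hn, mul_left_comm,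
          ← exp_add]
        push_cast
        ring_nf
    _ < (N ^ k : ℕ) := by
        rw [Nat.cast_pow]
        exact mul_lt_of_lt_one_right (by positivity) (exp_lt_one_iff.2 (by linarith))

theorem add_mul_lt_mul_mul_div {ℓ L d m y p N : ℝ} (hL : 0 < L) (hℓ : ℓ ≤ L) (hd : 0 < d)
    (h8 : 8 < d * L ^ 3) (hm : 0 < m) (hy0 : 0 ≤ y) (hym : y ≤ m) (hp : L ^ 5 ≤ p) (hN : 0 < N)
    (hy : d * N / (4 * L) ≤ y) :
    (m + y) * ℓ < m * p * y / N := by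
  have hyN : d / (4 * L) ≤ y / N := by
    rwa [le_div_iff₀ hN, div_mul_eq_mul_div]
  calc (m + y) * ℓ ≤ (m + y) * L := by gcongr
    _ ≤ 2 * m * L := by nlinarith
    _ < 2 * m * L * (d * L ^ 3 / 8) := lt_mul_of_one_lt_right (by positivity) (by linarith)
    _ = m * L ^ 5 * (d / (4 * L)) := by field_simp; ring
    _ ≤ m * p * (y / N) := by
      gcongr
      exact mul_nonneg hm.le ((pow_pos hL 5).le.trans hp)
    _ = m * p * y / N := by ring

theorem eventually_logb_bounds {d : ℝ} (hd : 0 < d) : ∀ᶠ n : ℕ in atTop,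
    8 < d * logb 2 n ^ 3 ∧ 2 * d ≤ logb 2 n ∧ 2 * logb 2 n ≤ d * n := by
  have hL : Tendsto (fun n : ℕ => logb 2 n) atTop atTop :=
    (tendsto_logb_atTop one_lt_two).comp tendsto_natCast_atTop_atTop
  have hlog2 : 0 < log 2 := log_pos one_lt_two
  filter_upwards
    [(((tendsto_pow_atTop three_ne_zero).comp hL).const_mul_atTop hd).eventually_gt_atTop 8,
    hL.eventually_ge_atTop (2 * d),
    isLittleO_log_id_atTop.natCast_atTop.bound (by positivity : 0 < d * log 2 / 2)]
    with n h8 hdL hlog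
  refine ⟨h8, hdL, ?_⟩
  rw [Real.norm_of_nonneg (log_natCast_nonneg n), id, Real.norm_natCast] at hlog
  rw [logb, mul_div_assoc', div_le_iff₀ hlog2]
  linarith

theorem choose_mul_choose_mul_pow_lt_of_logb {d : ℝ} {n : ℕ} (hd : 0 < d)
    (h8 : 8 < d * logb 2 n ^ 3) (hdL : 2 * d ≤ logb 2 n) (hn : 2 * logb 2 n ≤ d * n)
    {m : ℕ} (hm : m = ⌊d * n / logb 2 n⌋₊) :
    m + 2 ≤ n ∧ n.choose m * (n - 1).choose ((m + 1) / 2) * (n - 1 - (m + 1) / 2) ^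
      (m * ⌈logb 2 n ^ 5⌉₊) < (n - 1) ^ (m * ⌈logb 2 n ^ 5⌉₊) := by
  set L := logb 2 (n : ℝ)
  have hL : 0 < L := by linarith
  set x := d * n / L with hx
  have hx2 : 2 ≤ x := by rw [le_div_iff₀ hL]; linarith
  have hxn : 2 * x ≤ n := by
    rw [← le_div_iff₀' two_pos, div_le_iff₀ hL]
    nlinarith [(Nat.cast_nonneg n : (0 : ℝ) ≤ n)]
  have hm2 : 2 ≤ m := hm ▸ Nat.le_floor (by exact_mod_cast hx2)
  have hmx : (m : ℝ) ≤ x := hm ▸ Nat.floor_le (by linarith)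
  have hxm : x < m + 1 := hm ▸ Nat.lt_floor_add_one x
  have hmn : m + 2 ≤ n := by
    have : (m : ℝ) + 2 ≤ n := by linarith [(by exact_mod_cast hm2 : (2 : ℝ) ≤ m)]
    exact_mod_cast this
  refine ⟨hmn, choose_mul_choose_mul_pow_lt (by omega) (Nat.sub_le n 1) (by omega) ?_⟩
  have hy : (m : ℝ) ≤ 2 * ((m + 1) / 2 : ℕ) := by exact_mod_cast (by omega : m ≤ 2 * ((m + 1) / 2))
  push_cast
  refine add_mul_lt_mul_mul_div hL ?_ hd h8 (by positivity) (by positivity)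
    (by exact_mod_cast (by omega : (m + 1) / 2 ≤ m)) (Nat.le_ceil _)
    (by exact_mod_cast (by omega : 0 < n - 1)) ?_
  · exact le_div_self (log_natCast_nonneg n) (log_pos one_lt_two)
      ((log_le_sub_one_of_pos two_pos).trans (by norm_num))
  · calc d * ((n - 1 : ℕ) : ℝ) / (4 * L) ≤ d * n / (4 * L) := by
          gcongr; exact_mod_cast Nat.sub_le n 1
      _ = x / 4 := by rw [hx]; ring
      _ ≤ _ := by linarith

/-- For every d > 0 and all sufficiently large n: for every pointed graph G with n
vertices there is a map σ assigning to each vertex a sequence of p = ⌈log⁵ n⌉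
variables such that for all A ⊆ G and B ⊆ V with |A| = |B| = ⌊dn/log n⌋, the image
σ(A) intersects B in at least dn/(2 log n) variables.  (Logarithms are base 2; the
variables are the non-sink vertices.) -/
theorem good_map_exists (d : ℝ) (hd : 0 < d) :
    ∃ n₀ : ℕ, ∀ n : ℕ, n₀ ≤ n → ∀ G : PGraph, IsPointed G → G.verts.card = n →
      ∃ σ : ℕ → Fin (⌈(Real.logb 2 n) ^ 5⌉₊) → ℕ,
        (∀ v ∈ G.verts, ∀ i, σ v i ∈ G.verts.erase G.sink) ∧
        ∀ A ⊆ G.verts, ∀ B ⊆ G.verts.erase G.sink,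
          A.card = ⌊d * n / Real.logb 2 n⌋₊ → B.card = ⌊d * n / Real.logb 2 n⌋₊ →
          d * n / (2 * Real.logb 2 n) ≤ ((hitSet σ A B).card : ℝ) := by
  obtain ⟨n₀, hn₀⟩ := eventually_atTop.1 (eventually_logb_bounds hd)
  refine ⟨n₀, fun n hn G hG hcard => ?_⟩
  obtain ⟨h8, hdL, hdn⟩ := hn₀ n hn
  set m := ⌊d * n / logb 2 n⌋₊ with hm
  obtain ⟨hmn, hcount⟩ := choose_mul_choose_mul_pow_lt_of_logb hd h8 hdL hdn hm
  have hV : #(G.verts.erase G.sink) = n - 1 := by rw [card_erase_of_mem hG.1, hcard]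
  obtain ⟨σ, hσV, hσ⟩ := Finset.exists_hitting_map G.verts (G.verts.erase G.sink)
    (m := m) (y := (m + 1) / 2) (card_pos.1 (by rw [hV]; omega)) (by omega) (by rwa [hcard, hV])
  refine ⟨σ, hσV, fun A hA B hB hAm hBm => ?_⟩
  have hhit := card_lt_card_hitSet_add fun Y hY hYy => hσ A hA hAm Y (hY.trans hB) hYy
  have h2 : (m : ℝ) + 1 ≤ 2 * #(hitSet σ A B) := by
    exact_mod_cast (by omega : m + 1 ≤ 2 * #(hitSet σ A B))
  calc d * n / (2 * logb 2 n) = d * n / logb 2 n / 2 := by ring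
    _ ≤ ((m : ℝ) + 1) / 2 := by gcongr; exact (Nat.lt_floor_add_one _).le
    _ ≤ #(hitSet σ A B) := by linarith
end
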